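/- Let 𝔥 be a right Leibniz algebra over a field k. Define C := k·1 ⊕ 𝔥 with Δ(1) = 1 ⊗ 1, all elements of 𝔥 primitive (Δ(x) = 1 ⊗ x + x ⊗ 1), ε(1) = 1, ε(x) = 0 for x ∈ 𝔥, and x ◁ y := [x,y] for x, y ∈ 𝔥, 1 ◁ c = ε(c)1, c ◁ 1 = c. Then C is a rack bialgebra. -/
import Mathlib


open TensorProduct

set_option maxHeartbeats 1000000

/-- A rack bialgebra over a field `k`: a counital coaugmented coalgebra
`(C, Δ, ε, 1)` together with a coalgebra morphism `◁ : C ⊗ C → C`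
(given here as a bilinear map `lhd`) which is self-distributive and satisfies
`x ◁ 1 = x`, `1 ◁ x = ε(x)·1` and `ε(x ◁ y) = ε(x)ε(y)`. -/
structure RackBialgebra (k C : Type) [Field k] [AddCommGroup C] [Module k C] where
  comul : C →ₗ[k] C ⊗[k] C
  counit : C →ₗ[k] k
  one : C
  lhd : C →ₗ[k] C →ₗ[k] C
  coassoc : (TensorProduct.assoc k C C C).toLinearMap ∘ₗ
      TensorProduct.map comul LinearMap.id ∘ₗ comul =
    TensorProduct.map LinearMap.id comul ∘ₗ comul
  counit_comul : (TensorProduct.lid k C).toLinearMap ∘ₗ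
      TensorProduct.map counit LinearMap.id ∘ₗ comul = LinearMap.id
  comul_counit : (TensorProduct.rid k C).toLinearMap ∘ₗ
      TensorProduct.map LinearMap.id counit ∘ₗ comul = LinearMap.id
  comul_one : comul one = one ⊗ₜ[k] one
  counit_one : counit one = 1
  lhd_one : ∀ a, lhd a one = a
  one_lhd : ∀ a, lhd one a = counit a • one
  counit_lhd : ∀ a b, counit (lhd a b) = counit a * counit b
  lhd_coalgebra_morphism : comul ∘ₗ TensorProduct.lift lhd =
    TensorProduct.map (TensorProduct.lift lhd) (TensorProduct.lift lhd) ∘ₗ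
      (TensorProduct.tensorTensorTensorComm k C C C C).toLinearMap ∘ₗ
      TensorProduct.map comul comul
  self_distrib : TensorProduct.lift lhd ∘ₗ
      TensorProduct.map (TensorProduct.lift lhd) LinearMap.id =
    TensorProduct.lift lhd ∘ₗ
      TensorProduct.map (TensorProduct.lift lhd) (TensorProduct.lift lhd) ∘ₗ
      (TensorProduct.tensorTensorTensorComm k C C C C).toLinearMap ∘ₗ
      TensorProduct.map LinearMap.id comul

/-- Cocommutativity of the underlying coalgebra of a rack bialgebra. -/
def RackBialgebra.Cocommutative {k C : Type} [Field k] [AddCommGroup C]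
    [Module k C] (R : RackBialgebra k C) : Prop :=
  (TensorProduct.comm k C C).toLinearMap ∘ₗ R.comul = R.comul



variable (k : Type) [Field k] (V : Type) [AddCommGroup V] [Module k V]

/-- The coaugmentation `1` of the counitisation `C = k ⊕ V`. -/
def oneL : k × V := (1, 0)

/-- The counit of the counitisation `C = k ⊕ V`. -/
def counitL : (k × V) →ₗ[k] k := LinearMap.fst k k V

/-- The coproduct of the counitisation `C = k ⊕ V` of the coalgebra `V` with
zero coproduct: `Δ(a, x) = a·(1 ⊗ 1) + 1 ⊗ x + x ⊗ 1` (all elements of `V`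
are primitive and `1 = (1,0)` is group-like). -/
noncomputable def comulL : (k × V) →ₗ[k] (k × V) ⊗[k] (k × V) :=
  (LinearMap.toSpanSingleton k ((k × V) ⊗[k] (k × V))
      (oneL k V ⊗ₜ[k] oneL k V)) ∘ₗ LinearMap.fst k k V +
  ((TensorProduct.mk k (k × V) (k × V) (oneL k V)) ∘ₗ LinearMap.inr k k V +
    ((TensorProduct.mk k (k × V) (k × V)).flip (oneL k V)) ∘ₗ
      LinearMap.inr k k V) ∘ₗ LinearMap.snd k k V

/-- The rack product on `C = k ⊕ 𝔥` induced by a bilinear bracket `β` on `𝔥`: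
`(a·1 + x) ◁ (b·1 + y) = ab·1 + b·x + [x, y]`. -/
def lhdL (β : V →ₗ[k] V →ₗ[k] V) : (k × V) →ₗ[k] (k × V) →ₗ[k] (k × V) :=
  LinearMap.mk₂ k (fun c d => (c.1 * d.1, d.1 • c.2 + β c.2 d.2))
    (fun m₁ m₂ n => by
      apply Prod.ext <;> simp [add_mul, smul_add] <;> abel)
    (fun a m n => by
      apply Prod.ext
      · simp [Prod.smul_fst, smul_eq_mul]; ring
      · simp [Prod.smul_fst, Prod.smul_snd, smul_eq_mul, smul_add, mul_smul,
          smul_comm a n.1 m.2])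
    (fun m n₁ n₂ => by
      apply Prod.ext <;> simp [mul_add, add_smul] <;> abel)
    (fun a m n => by
      apply Prod.ext
      · simp [Prod.smul_fst, smul_eq_mul]; ring
      · simp [Prod.smul_fst, Prod.smul_snd, smul_eq_mul, smul_add, mul_smul])


lemma comulL_apply (a : k) (x : V) :
    comulL k V (a, x) = a • ((1,0) ⊗ₜ[k] ((1:k),(0:V))) +
      (((1:k),(0:V)) ⊗ₜ[k] ((0 : k), x) + ((0 : k), x) ⊗ₜ[k] ((1:k),(0:V))) := by
  simp [comulL, add_assoc, oneL]

lemma lhdL_apply (β : V →ₗ[k] V →ₗ[k] V) (a b : k) (x y : V) :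
    lhdL k V β (a,x) (b,y) = (a*b, b • x + β x y) := rfl

lemma pair_add (u v : V) : ((0:k), u + v) = (((0:k),u) + ((0:k),v) : k × V) := by simp
lemma pair_smul (b : k) (u : V) : ((0:k), b•u) = b • (((0:k),u) : k × V) := by simp
lemma pair_zero : ((0:k), (0:V)) = (0 : k × V) := rfl

lemma counitL_apply (a : k) (x : V) : counitL k V (a, x) = a := rfl

/-- if `𝔥` is a right Leibniz algebra over `k`, then
`C = k·1 ⊕ 𝔥` with all elements of `𝔥` primitive, `1` group-like,
`x ◁ y = [x,y]`, `1 ◁ c = ε(c)·1`, `c ◁ 1 = c` is a rack bialgebra. -/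
theorem leibniz_gives_rack_bialgebra (k V : Type) [Field k] [AddCommGroup V]
    [Module k V] (β : V →ₗ[k] V →ₗ[k] V)
    (leibniz : ∀ x y z : V, β (β x y) z = β (β x z) y + β x (β y z)) :
    ∃ R : RackBialgebra k (k × V),
      R.comul = comulL k V ∧ R.counit = counitL k V ∧ R.one = oneL k V ∧
        R.lhd = lhdL k V β := by
  refine ⟨⟨comulL k V, counitL k V, oneL k V, lhdL k V β,
    ?_, ?_, ?_, ?_, ?_, ?_, ?_, ?_, ?_, ?_⟩, rfl, rfl, rfl, rfl⟩
  · apply LinearMap.ext; rintro ⟨a,x⟩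
    simp only [LinearMap.coe_comp, Function.comp_apply, comulL_apply, map_add,
      LinearMap.map_smul, map_smul, TensorProduct.map_tmul, LinearMap.id_coe, id_eq,
      LinearEquiv.coe_coe, TensorProduct.assoc_tmul, tmul_add, add_tmul,
      tmul_smul, ← smul_tmul', pair_zero, tmul_zero, zero_tmul, smul_zero,
      add_zero, zero_add, one_smul, zero_smul, mul_one, one_mul, mul_zero, zero_mul]
    module
  · apply LinearMap.ext; rintro ⟨a,x⟩
    simp only [LinearMap.coe_comp, Function.comp_apply, comulL_apply, map_add,
      LinearMap.map_smul, map_smul, TensorProduct.map_tmul, LinearMap.id_coe, id_eq,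
      LinearEquiv.coe_coe, TensorProduct.lid_tmul, counitL_apply, tmul_add, add_tmul,
      tmul_smul, ← smul_tmul', pair_zero, tmul_zero, zero_tmul, smul_zero,
      add_zero, zero_add, one_smul, zero_smul, mul_one, one_mul, mul_zero, zero_mul]
    apply Prod.ext <;> simp
  · apply LinearMap.ext; rintro ⟨a,x⟩
    simp only [LinearMap.coe_comp, Function.comp_apply, comulL_apply, map_add,
      LinearMap.map_smul, map_smul, TensorProduct.map_tmul, LinearMap.id_coe, id_eq,
      LinearEquiv.coe_coe, TensorProduct.rid_tmul, counitL_apply, tmul_add, add_tmul,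
      tmul_smul, ← smul_tmul', pair_zero, tmul_zero, zero_tmul, smul_zero,
      add_zero, zero_add, one_smul, zero_smul, mul_one, one_mul, mul_zero, zero_mul]
    apply Prod.ext <;> simp
  · simp [oneL, comulL_apply, pair_zero]
  · rfl
  · rintro ⟨a,x⟩; simp [oneL, lhdL_apply]
  · rintro ⟨a,x⟩
    simp [oneL, lhdL_apply, counitL_apply, Prod.ext_iff]
  · rintro ⟨a,x⟩ ⟨b,y⟩; rfl
  · apply TensorProduct.ext'; rintro ⟨a,x⟩ ⟨b,y⟩
    simp only [LinearMap.coe_comp, Function.comp_apply, comulL_apply, lhdL_apply, map_add,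
      LinearMap.map_smul, map_smul, TensorProduct.map_tmul, TensorProduct.lift.tmul,
      LinearMap.id_coe, id_eq, LinearEquiv.coe_coe,
      TensorProduct.tensorTensorTensorComm_tmul, tmul_add, add_tmul,
      tmul_smul, ← smul_tmul', pair_zero, tmul_zero, zero_tmul, smul_zero, map_zero,
      LinearMap.zero_apply, pair_add, pair_smul,
      add_zero, zero_add, one_smul, zero_smul, mul_one, one_mul, mul_zero, zero_mul]
    module
  · apply TensorProduct.ext'
    intro u c
    induction u using TensorProduct.induction_on with
    | zero => simp
    | add u v hu hv => simp only [add_tmul, map_add, hu, hv]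
    | tmul p q =>
      obtain ⟨a,x⟩ := p; obtain ⟨b,y⟩ := q; obtain ⟨c₁,z⟩ := c
      simp only [LinearMap.coe_comp, Function.comp_apply, comulL_apply, lhdL_apply, map_add,
        LinearMap.map_smul, map_smul, TensorProduct.map_tmul, TensorProduct.lift.tmul,
        LinearMap.id_coe, id_eq, LinearEquiv.coe_coe,
        TensorProduct.tensorTensorTensorComm_tmul, tmul_add, add_tmul,
        tmul_smul, ← smul_tmul', pair_zero, tmul_zero, zero_tmul, smul_zero, map_zero,
        LinearMap.zero_apply, pair_add, pair_smul, LinearMap.add_apply,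
        add_zero, zero_add, one_smul, zero_smul, mul_one, one_mul, mul_zero, zero_mul]
      rw [leibniz x y z]
      apply Prod.ext
      · simp [mul_comm]
      · simp [smul_add]; abel
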